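/- arXiv:2304.09273 — 10 statements merged into one kernel-verified Lean document; each statement's English description precedes it below -/
import Mathlib

section
/- If M is a reversible hypermagma with identity (a mosaic), then for all x, y in M, the set of inverses of elements of x ⋆ y equals y⁻¹ ⋆ x⁻¹, i.e. (x ⋆ y)⁻¹ = y⁻¹ ⋆ x⁻¹. -/
/-- In a mosaic (reversible hypermagma with identity), `(x ⋆ y)⁻¹ = y⁻¹ ⋆ x⁻¹`. -/
theorem stmt_0 {M : Type*} (star : M → M → Set M) (e : M) (inv : M → M)
    (hid : ∀ x : M, star e x = {x} ∧ star x e = {x})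
    (hrev : ∀ x y z : M, x ∈ star y z → y ∈ star x (inv z) ∧ z ∈ star (inv y) x)
    (x y : M) :
    inv '' (star x y) = star (inv y) (inv x) := by
  -- inv is involutive
  have hinv : ∀ a : M, inv (inv a) = a := by
    intro a
    have h1 : a ∈ star e a := by rw [(hid a).1]; rfl
    have h2 : e ∈ star a (inv a) := (hrev a e a h1).1
    have h3 : a ∈ star e (inv (inv a)) := (hrev e a (inv a) h2).1
    rw [(hid (inv (inv a))).1] at h3
    exact h3.symm
  have key : ∀ u v w : M, w ∈ star u v → inv w ∈ star (inv v) (inv u) := by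
    intro u v w hw
    have h1 : u ∈ star w (inv v) := (hrev w u v hw).1
    have h2 : inv v ∈ star (inv w) u := (hrev u w (inv v) h1).2
    exact (hrev (inv v) (inv w) u h2).1
  ext z
  constructor
  · rintro ⟨w, hw, rfl⟩
    exact key x y w hw
  · intro hz
    have := key (inv y) (inv x) z hz
    rw [hinv, hinv] at this
    exact ⟨inv z, this, hinv z⟩
end

section
/- Let G be an associative hypermagma and suppose there exists z ∈ G such that x ⋆ z ≠ ∅ for all x ∈ G, and for all y ∈ G there exists y' ∈ G with z ∈ y ⋆ y'. Then x ⋆ y ≠ ∅ for all x, y ∈ G (the hyperoperation is total). -/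
/-- An associative hypermagma with an element `z` such that `x ⋆ z ≠ ∅` for all `x`
and every `y` admits `y'` with `z ∈ y ⋆ y'` has a total hyperoperation. -/
theorem stmt_1 {G : Type*} (star : G → G → Set G)
    (hassoc : ∀ x y z : G,
      {w | ∃ u ∈ star y z, w ∈ star x u} = {w | ∃ u ∈ star x y, w ∈ star u z})
    (z : G) (hz : ∀ x : G, (star x z).Nonempty)
    (hz' : ∀ y : G, ∃ y' : G, z ∈ star y y') :
    ∀ x y : G, (star x y).Nonempty := by
  intro x y
  obtain ⟨y', hy'⟩ := hz' y
  obtain ⟨w, hw⟩ := hz x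
  have h : w ∈ {w | ∃ u ∈ star y y', w ∈ star x u} := ⟨z, hy', hw⟩
  rw [hassoc] at h
  obtain ⟨u, hu, -⟩ := h
  exact ⟨u, hu⟩
end

section
/- A mosaic is a hypergroup if and only if it is associative; that is, in an associative mosaic the hyperoperation is automatically total (nonempty products). -/
/-- A mosaic is a hypergroup (associative and total) if and only if it is associative. -/
theorem stmt_2 {M : Type*} (star : M → M → Set M) (e : M) (inv : M → M)
    (hid : ∀ x : M, star e x = {x} ∧ star x e = {x})
    (hrev : ∀ x y z : M, x ∈ star y z → y ∈ star x (inv z) ∧ z ∈ star (inv y) x) :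
    ((∀ x y z : M,
        {w | ∃ u ∈ star y z, w ∈ star x u} = {w | ∃ u ∈ star x y, w ∈ star u z}) ∧
      (∀ x y : M, (star x y).Nonempty)) ↔
    (∀ x y z : M,
        {w | ∃ u ∈ star y z, w ∈ star x u} = {w | ∃ u ∈ star x y, w ∈ star u z}) := by
  constructor
  · exact fun h => h.1
  · intro hassoc
    refine ⟨hassoc, fun x y => ?_⟩
    have hy : y ∈ star e y := by rw [(hid y).1]; rfl
    have he : e ∈ star y (inv y) := (hrev y e y hy).1
    have hx : x ∈ star x e := by rw [(hid x).2]; rfl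
    have : x ∈ {w | ∃ u ∈ star y (inv y), w ∈ star x u} := ⟨e, he, hx⟩
    rw [hassoc x y (inv y)] at this
    obtain ⟨u, hu, -⟩ := this
    exact ⟨u, hu⟩
end

section
/- In a mosaic, every element has a unique inverse: for each x, e ∈ x ⋆ x⁻¹ ∩ x⁻¹ ⋆ x, and if x' satisfies e ∈ x ⋆ x', then x' = x⁻¹. -/
/-- In a mosaic every element has a unique inverse. -/
theorem stmt_4 {M : Type*} (star : M → M → Set M) (e : M) (inv : M → M)
    (hid : ∀ x : M, star e x = {x} ∧ star x e = {x})
    (hrev : ∀ x y z : M, x ∈ star y z → y ∈ star x (inv z) ∧ z ∈ star (inv y) x) :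
    (∀ x : M, e ∈ star x (inv x) ∧ e ∈ star (inv x) x) ∧
      (∀ x x' : M, e ∈ star x x' → x' = inv x) := by
  constructor
  · intro x
    have h1 : x ∈ star e x := by rw [(hid x).1]; rfl
    have h2 : x ∈ star x e := by rw [(hid x).2]; rfl
    exact ⟨(hrev x e x h1).1, (hrev x x e h2).2⟩
  · intro x x' h
    have := (hrev e x x' h).2
    rw [(hid (inv x)).2] at this
    exact this
end

section
/- For a mosaic G and a subset N ⊆ G, N is a strict submosaic of G if and only if the function φ_N : G → K sending elements of N to 0 and all other elements to 1 is a unit-preserving morphism of mosaics, where K is the additive hypergroup of the Krasner hyperfield. Consequently, strict submosaics of G are in natural bijection with morphisms G → K. -/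
/-!
Since `1 + 1 = {0, 1}` in `K`, the morphism condition for `φ_N` only constrains `z ∈ x ⋆ y` when
`x` or `y` lies in `N`, and then it says that `z ∈ N` exactly when the other factor is in `N`.
Reversibility moves elements across `⋆` at the cost of an inverse, which turns this condition
into closure of `N` under `⋆` and `⁻¹`; for `⁻¹` one uses `e ∈ x ⋆ x⁻¹`.
-/

open Classical

/-- The additive hypergroup of the Krasner hyperfield, on `Fin 2` with identity `0`. -/
def kadd : Fin 2 → Fin 2 → Set (Fin 2) := fun a b =>
  if a = 0 then {b} else if b = 0 then {a} else Set.univ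

theorem mem_kadd_iff {a b c : Fin 2} :
    c ∈ kadd a b ↔ (a = 0 → c = b) ∧ (b = 0 → c = a) := by
  fin_cases a <;> fin_cases b <;> fin_cases c <;> simp [kadd]

/-- The map `φ_N`. -/
noncomputable def krasnerIndicator {α : Type*} (N : Set α) : α → Fin 2 :=
  fun x => if x ∈ N then 0 else 1

section KrasnerIndicator

variable {α : Type*}

@[simp]
theorem krasnerIndicator_eq_zero_iff {N : Set α} {x : α} :
    krasnerIndicator N x = 0 ↔ x ∈ N := by
  by_cases hx : x ∈ N <;> simp [krasnerIndicator, hx]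

theorem krasnerIndicator_injective :
    Function.Injective (krasnerIndicator : Set α → α → Fin 2) :=
  fun N M h => Set.ext fun x => by
    rw [← krasnerIndicator_eq_zero_iff, ← krasnerIndicator_eq_zero_iff (N := M), h]

theorem krasnerIndicator_setOf_eq_zero (f : α → Fin 2) :
    krasnerIndicator {x | f x = 0} = f := by
  funext x
  simp only [krasnerIndicator, Set.mem_ofPred_eq]
  split_ifs with hx
  · exact hx.symm
  · exact (Fin.eq_one_of_ne_zero _ hx).symm

theorem krasnerIndicator_mem_kadd_iff {N : Set α} {x y z : α} :
    krasnerIndicator N z ∈ kadd (krasnerIndicator N x) (krasnerIndicator N y) ↔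
      (x ∈ N → (z ∈ N ↔ y ∈ N)) ∧ (y ∈ N → (z ∈ N ↔ x ∈ N)) := by
  by_cases hx : x ∈ N <;> by_cases hy : y ∈ N <;> by_cases hz : z ∈ N <;>
    simp [mem_kadd_iff, krasnerIndicator, hx, hy, hz]

end KrasnerIndicator

section Mosaic

variable {G : Type*} (star : G → G → Set G) (e : G) (inv : G → G)

def IsStrictSubmosaic (N : Set G) : Prop :=
  e ∈ N ∧ (∀ x ∈ N, inv x ∈ N) ∧ ∀ x ∈ N, ∀ y ∈ N, star x y ⊆ N

def IsMorphismToKrasner (f : G → Fin 2) : Prop :=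
  f e = 0 ∧ ∀ x y : G, ∀ z ∈ star x y, f z ∈ kadd (f x) (f y)

variable {star e inv}

theorem IsStrictSubmosaic.mem_iff_right
    (hrev : ∀ x y z : G, x ∈ star y z → y ∈ star x (inv z) ∧ z ∈ star (inv y) x)
    {N : Set G} (hN : IsStrictSubmosaic star e inv N) {x y z : G} (hx : x ∈ N)
    (hz : z ∈ star x y) : z ∈ N ↔ y ∈ N :=
  ⟨fun hzN => hN.2.2 _ (hN.2.1 x hx) z hzN (hrev z x y hz).2,
    fun hy => hN.2.2 x hx y hy hz⟩

theorem IsStrictSubmosaic.mem_iff_left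
    (hrev : ∀ x y z : G, x ∈ star y z → y ∈ star x (inv z) ∧ z ∈ star (inv y) x)
    {N : Set G} (hN : IsStrictSubmosaic star e inv N) {x y z : G} (hy : y ∈ N)
    (hz : z ∈ star x y) : z ∈ N ↔ x ∈ N :=
  ⟨fun hzN => hN.2.2 z hzN _ (hN.2.1 y hy) (hrev z x y hz).1,
    fun hx => hN.2.2 x hx y hy hz⟩

theorem mem_star_inv_self (hid : ∀ x : G, star e x = {x} ∧ star x e = {x})
    (hrev : ∀ x y z : G, x ∈ star y z → y ∈ star x (inv z) ∧ z ∈ star (inv y) x)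
    (x : G) :
    e ∈ star x (inv x) :=
  (hrev x e x (by rw [(hid x).1]; rfl)).1

theorem isStrictSubmosaic_iff_isMorphismToKrasner
    (hid : ∀ x : G, star e x = {x} ∧ star x e = {x})
    (hrev : ∀ x y z : G, x ∈ star y z → y ∈ star x (inv z) ∧ z ∈ star (inv y) x)
    (N : Set G) :
    IsStrictSubmosaic star e inv N ↔ IsMorphismToKrasner star e (krasnerIndicator N) := by
  simp only [IsMorphismToKrasner, krasnerIndicator_eq_zero_iff, krasnerIndicator_mem_kadd_iff]
  constructor
  · intro hN
    exact ⟨hN.1, fun x y z hz =>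
      ⟨fun hx => hN.mem_iff_right hrev hx hz, fun hy => hN.mem_iff_left hrev hy hz⟩⟩
  · rintro ⟨he, hmor⟩
    refine ⟨he, fun x hx => ?_, fun x hx y hy z hz => ((hmor x y z hz).1 hx).2 hy⟩
    exact ((hmor x (inv x) e (mem_star_inv_self hid hrev x)).1 hx).1 he

end Mosaic

/-- For a mosaic `G` and `N ⊆ G`, `N` is a strict submosaic iff the indicator-type map
`φ_N` (sending `N` to `0` and its complement to `1`) is a unit-preserving morphism to the
Krasner mosaic `K`; moreover `N ↦ φ_N` is a bijection between strict submosaics and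
morphisms `G → K`. -/
theorem stmt_12 {G : Type*} (star : G → G → Set G) (e : G) (inv : G → G)
    (hid : ∀ x : G, star e x = {x} ∧ star x e = {x})
    (hrev : ∀ x y z : G, x ∈ star y z → y ∈ star x (inv z) ∧ z ∈ star (inv y) x) :
    (∀ N : Set G,
      (e ∈ N ∧ (∀ x ∈ N, inv x ∈ N) ∧ ∀ x ∈ N, ∀ y ∈ N, star x y ⊆ N) ↔
      ((fun x => if x ∈ N then (0 : Fin 2) else 1) e = 0 ∧
        ∀ x y : G, ∀ z ∈ star x y,
          (if z ∈ N then (0 : Fin 2) else 1) ∈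
            kadd (if x ∈ N then (0 : Fin 2) else 1) (if y ∈ N then (0 : Fin 2) else 1))) ∧
    (∀ f : G → Fin 2,
      (f e = 0 ∧ ∀ x y : G, ∀ z ∈ star x y, f z ∈ kadd (f x) (f y)) →
      ∃! N : Set G,
        (e ∈ N ∧ (∀ x ∈ N, inv x ∈ N) ∧ ∀ x ∈ N, ∀ y ∈ N, star x y ⊆ N) ∧
        (fun x => if x ∈ N then (0 : Fin 2) else 1) = f) := by
  have key := isStrictSubmosaic_iff_isMorphismToKrasner hid hrev
  refine ⟨key, fun f hf => ⟨{x | f x = 0}, ⟨?_, krasnerIndicator_setOf_eq_zero f⟩, ?_⟩⟩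
  · apply (key _).2
    rw [krasnerIndicator_setOf_eq_zero]
    exact hf
  · rintro N ⟨-, hN⟩
    exact krasnerIndicator_injective (hN.trans (krasnerIndicator_setOf_eq_zero f).symm)
end

section
/- Let A be an abelian group and G a group acting on A by automorphisms. The orbit space A/G with hyperoperation Ga + Gb = {Gc : c ∈ Ga + Gb} (where Ga + Gb on the right denotes the set of sums of elements of the two orbits), identity G·0 = {0}, and inversion G a ↦ G(−a), is a canonical hypergroup: commutative, total, associative, and reversible. -/
section Aux

variable {G A : Type*} [Group G] [AddCommGroup A] [DistribMulAction G A]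

theorem stmt14_orbit_eq_of_mk_eq {a b : A}
    (h : Quotient.mk (MulAction.orbitRel G A) a = Quotient.mk (MulAction.orbitRel G A) b) :
    MulAction.orbit G a = MulAction.orbit G b := by
  rw [MulAction.orbit_eq_iff]
  exact (MulAction.orbitRel_apply).mp (Quotient.eq.mp h)

theorem stmt14_mk_eq_of_mem_orbit {a b : A} (h : a ∈ MulAction.orbit G b) :
    Quotient.mk (MulAction.orbitRel G A) a = Quotient.mk (MulAction.orbitRel G A) b :=
  Quotient.eq.mpr ((MulAction.orbitRel_apply).mpr h)

theorem stmt14_smul_mem_orbit {a b : A} (g : G) (h : a ∈ MulAction.orbit G b) :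
    g • a ∈ MulAction.orbit G b := by
  obtain ⟨h', rfl⟩ := h
  rw [← mul_smul]
  exact MulAction.mem_orbit b (g * h')

theorem stmt14_neg_mem_orbit {a b : A} (h : a ∈ MulAction.orbit G b) :
    -a ∈ MulAction.orbit G (-b) := by
  obtain ⟨g, rfl⟩ := h
  rw [← smul_neg]
  exact MulAction.mem_orbit (-b) g

end Aux

/-- The orbit space `A/G` of an abelian group under a group acting by automorphisms,
with `Ga + Gb = {Gc : c ∈ Ga + Gb}`, is a canonical hypergroup. -/
theorem stmt_14 {G A : Type*} [Group G] [AddCommGroup A] [DistribMulAction G A] :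
    let Q := Quotient (MulAction.orbitRel G A)
    let mk : A → Q := Quotient.mk (MulAction.orbitRel G A)
    let add : Q → Q → Set Q := fun X Y =>
      {Z | ∃ a b : A, X = mk a ∧ Y = mk b ∧
        ∃ u ∈ MulAction.orbit G a, ∃ v ∈ MulAction.orbit G b, Z = mk (u + v)}
    (∀ X Y : Q, add X Y = add Y X) ∧
    (∀ X Y : Q, (add X Y).Nonempty) ∧
    (∀ X Y Z : Q,
      {W | ∃ U ∈ add Y Z, W ∈ add X U} = {W | ∃ U ∈ add X Y, W ∈ add U Z}) ∧
    (∀ X : Q, add (mk 0) X = {X} ∧ add X (mk 0) = {X}) ∧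
    (∃ neg : Q → Q, (∀ a : A, neg (mk a) = mk (-a)) ∧
      ∀ X Y Z : Q, X ∈ add Y Z → Z ∈ add X (neg Y)) := by
  intro Q mk add
  have hmem : ∀ (a b : A) (Z : Q), Z ∈ add (mk a) (mk b) ↔
      ∃ u ∈ MulAction.orbit G a, ∃ v ∈ MulAction.orbit G b, Z = mk (u + v) := by
    intro a b Z
    constructor
    · rintro ⟨a', b', ha, hb, u, hu, v, hv, rfl⟩
      refine ⟨u, ?_, v, ?_, rfl⟩
      · rwa [stmt14_orbit_eq_of_mk_eq ha]
      · rwa [stmt14_orbit_eq_of_mk_eq hb]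
    · rintro ⟨u, hu, v, hv, rfl⟩
      exact ⟨a, b, rfl, rfl, u, hu, v, hv, rfl⟩
  have hcomm : ∀ X Y : Q, add X Y = add Y X := by
    intro X Y
    ext Z
    constructor <;> rintro ⟨a, b, ha, hb, u, hu, v, hv, rfl⟩ <;>
      exact ⟨b, a, hb, ha, v, hv, u, hu, by rw [add_comm]⟩
  refine ⟨hcomm, ?_, ?_, ?_, ?_⟩
  · -- total
    intro X Y
    obtain ⟨a, rfl⟩ := Quotient.exists_rep X
    obtain ⟨b, rfl⟩ := Quotient.exists_rep Y
    exact ⟨mk (a + b), (hmem a b _).mpr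
      ⟨a, MulAction.mem_orbit_self a, b, MulAction.mem_orbit_self b, rfl⟩⟩
  · -- associative
    intro X Y Z
    obtain ⟨a, rfl⟩ := Quotient.exists_rep X
    obtain ⟨b, rfl⟩ := Quotient.exists_rep Y
    obtain ⟨c, rfl⟩ := Quotient.exists_rep Z
    ext W
    constructor
    · rintro ⟨U, hU, hW⟩
      obtain ⟨v, hv, w, hw, rfl⟩ := (hmem b c U).mp hU
      obtain ⟨u, hu, x, hx, rfl⟩ := (hmem a (v + w) W).mp hW
      obtain ⟨g, rfl⟩ := hx
      refine ⟨mk (u + g • v), (hmem a b _).mpr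
        ⟨u, hu, g • v, stmt14_smul_mem_orbit g hv, rfl⟩, (hmem _ c _).mpr
        ⟨u + g • v, MulAction.mem_orbit_self _, g • w, stmt14_smul_mem_orbit g hw, ?_⟩⟩
      simp only [smul_add]
      congr 1
      abel
    · rintro ⟨U, hU, hW⟩
      obtain ⟨u, hu, v, hv, rfl⟩ := (hmem a b U).mp hU
      obtain ⟨x, hx, w, hw, rfl⟩ := (hmem (u + v) c W).mp hW
      obtain ⟨g, rfl⟩ := hx
      refine ⟨mk (g • v + w), (hmem b c _).mpr
        ⟨g • v, stmt14_smul_mem_orbit g hv, w, hw, rfl⟩, (hmem a _ _).mpr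
        ⟨g • u, stmt14_smul_mem_orbit g hu, g • v + w, MulAction.mem_orbit_self _, ?_⟩⟩
      simp only [smul_add]
      congr 1
      abel
  · -- identity
    have h0 : ∀ X : Q, add (mk 0) X = {X} := by
      intro X
      obtain ⟨b, rfl⟩ := Quotient.exists_rep X
      ext Z
      simp only [Set.mem_singleton_iff]
      rw [hmem]
      constructor
      · rintro ⟨u, hu, v, hv, rfl⟩
        obtain ⟨g, rfl⟩ := hu
        simp only [smul_zero, zero_add]
        exact stmt14_mk_eq_of_mem_orbit hv
      · rintro rfl
        exact ⟨0, MulAction.mem_orbit_self 0, b, MulAction.mem_orbit_self b,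
          by rw [zero_add]⟩
    exact fun X => ⟨h0 X, by rw [hcomm]; exact h0 X⟩
  · -- reversibility
    refine ⟨Quotient.map Neg.neg (fun a b hab => ?_), fun a => rfl, ?_⟩
    · exact (MulAction.orbitRel_apply).mpr
        (stmt14_neg_mem_orbit ((MulAction.orbitRel_apply).mp hab))
    · intro X Y Z hX
      obtain ⟨b, rfl⟩ := Quotient.exists_rep Y
      obtain ⟨c, rfl⟩ := Quotient.exists_rep Z
      obtain ⟨u, hu, v, hv, rfl⟩ := (hmem b c X).mp hX
      refine (hmem (u + v) (-b) (mk c)).mpr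
        ⟨u + v, MulAction.mem_orbit_self _, -u, stmt14_neg_mem_orbit hu, ?_⟩
      refine ((stmt14_mk_eq_of_mem_orbit hv).symm).trans ?_
      congr 1
      abel
end

section
/- Let (L, ∧, 1) be a meet-semilattice with top element 1. Define a hyperoperation on L by a ⊚ b = {c ∈ L : a ∧ c = b ∧ c = a ∧ b}. Then (L, ⊚, 1) is a commutative mosaic, with each element its own inverse. -/
/-- A meet-semilattice with top, under `a ⊚ b = {c | a ⊓ c = b ⊓ c = a ⊓ b}`, is a
commutative mosaic with identity `⊤` in which each element is its own inverse. -/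
theorem stmt_15 {L : Type*} [SemilatticeInf L] [OrderTop L] :
    let star : L → L → Set L := fun a b => {c | a ⊓ c = a ⊓ b ∧ b ⊓ c = a ⊓ b}
    (∀ a b : L, star a b = star b a) ∧
    (∀ x : L, star ⊤ x = {x} ∧ star x ⊤ = {x}) ∧
    (∀ x y z : L, x ∈ star y z → y ∈ star x z ∧ z ∈ star y x) := by
  intro star
  refine ⟨?_, ?_, ?_⟩
  · intro a b
    ext c
    simp only [star, Set.mem_setOf_eq, inf_comm b a]
    tauto
  · intro x
    constructor <;> ext c <;>
      simp only [star, Set.mem_setOf_eq, top_inf_eq, inf_top_eq, Set.mem_singleton_iff] <;>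
      constructor
    · rintro ⟨h1, h2⟩; exact h1
    · rintro rfl; exact ⟨rfl, inf_idem c⟩
    · rintro ⟨h1, h2⟩; exact h2
    · rintro rfl; exact ⟨inf_idem c, rfl⟩
  · rintro x y z ⟨h1, h2⟩
    have hzx : z ⊓ x = y ⊓ z := h2
    refine ⟨⟨?_, ?_⟩, ⟨?_, ?_⟩⟩
    · rw [inf_comm x y, h1, inf_comm x z, hzx]
    · rw [inf_comm z y, inf_comm x z, hzx]
    · exact h1.symm ▸ rfl
    · rw [inf_comm x z, hzx, h1]
end

section
/- Short morphisms of hypermagmas are stable under pullback: if p : M → N is short and f : L → N is any morphism of hypermagmas, then the projection π : L ×_N M → L from the pullback hypermagma is short, where L ×_N M = {(x, x') ∈ L × M : f(x) = p(x')} carries the hyperoperation (x, x') ⋆ (y, y') = ((x ⋆ y) × (x' ⋆ y')) ∩ (L ×_N M). -/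
/-- Short morphisms of hypermagmas are stable under pullback. -/
theorem stmt_16 {L M N : Type*} (starL : L → L → Set L) (starM : M → M → Set M)
    (starN : N → N → Set N) (p : M → N) (f : L → N)
    (hpmor : ∀ x y : M, p '' starM x y ⊆ starN (p x) (p y))
    (hpsurj : Function.Surjective p)
    (hpshort : ∀ x y : N,
      starN x y = p '' {z | ∃ a ∈ p ⁻¹' {x}, ∃ b ∈ p ⁻¹' {y}, z ∈ starM a b})
    (hfmor : ∀ x y : L, f '' starL x y ⊆ starN (f x) (f y)) :
    let P := {q : L × M // f q.1 = p q.2}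
    let starP : P → P → Set P := fun q r =>
      {s | s.1.1 ∈ starL q.1.1 r.1.1 ∧ s.1.2 ∈ starM q.1.2 r.1.2}
    let π : P → L := fun q => q.1.1
    (∀ q r : P, π '' starP q r ⊆ starL (π q) (π r)) ∧
    Function.Surjective π ∧
    (∀ x y : L, starL x y = π '' {s | ∃ a ∈ π ⁻¹' {x}, ∃ b ∈ π ⁻¹' {y}, s ∈ starP a b}) := by
  intro P starP π
  refine ⟨?_, ?_, ?_⟩
  · rintro q r z ⟨s, ⟨h1, _⟩, rfl⟩
    exact h1
  · intro x
    obtain ⟨m, hm⟩ := hpsurj (f x)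
    exact ⟨⟨(x, m), hm.symm⟩, rfl⟩
  · intro x y
    apply Set.Subset.antisymm
    · intro z hz
      have hfz : f z ∈ starN (f x) (f y) := hfmor x y ⟨z, hz, rfl⟩
      rw [hpshort] at hfz
      obtain ⟨w, ⟨a, ha, b, hb, hw⟩, hpw⟩ := hfz
      refine ⟨⟨(z, w), hpw.symm⟩, ⟨⟨(x, a), ha.symm⟩, rfl, ⟨(y, b), hb.symm⟩, rfl, hz, hw⟩, rfl⟩
    · rintro z ⟨s, ⟨a, ha, b, hb, h1, _⟩, rfl⟩
      simp only [Set.mem_preimage, Set.mem_singleton_iff] at ha hb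
      rw [← ha, ← hb]
      exact h1
end

section
/- There is no canonical hypergroup G with morphisms i₁, i₂ : ℤ/2ℤ → G forming a coproduct of ℤ/2ℤ with itself in the category of canonical hypergroups; i.e., the coproduct ℤ/2ℤ ⊔ ℤ/2ℤ does not exist in the category of canonical hypergroups. -/
/-- A canonical hypergroup: a commutative, total, associative, reversible
hyperoperation with identity. -/
structure CanHG : Type 1 where
  carrier : Type
  add : carrier → carrier → Set carrier
  zero : carrier
  neg : carrier → carrier
  comm : ∀ x y : carrier, add x y = add y x
  total : ∀ x y : carrier, (add x y).Nonempty
  zero_add : ∀ x : carrier, add zero x = {x}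
  assoc : ∀ x y z : carrier,
    {w | ∃ u ∈ add y z, w ∈ add x u} = {w | ∃ u ∈ add x y, w ∈ add u z}
  rev : ∀ x y z : carrier, x ∈ add y z → z ∈ add x (neg y)

/-- Morphisms of canonical hypergroups: unit-preserving with `f(x+y) ⊆ f(x)+f(y)`. -/
def IsHom (M N : CanHG) (f : M.carrier → N.carrier) : Prop :=
  f M.zero = N.zero ∧ ∀ x y : M.carrier, ∀ z ∈ M.add x y, f z ∈ N.add (f x) (f y)

/-- `ℤ/2ℤ` as a canonical hypergroup with singleton sums. -/
def Z2 : CanHG where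
  carrier := ZMod 2
  add a b := {a + b}
  zero := 0
  neg a := -a
  comm := by intro x y; rw [add_comm]
  total := by intro x y; exact ⟨x + y, rfl⟩
  zero_add := by intro x; simp
  assoc := by
    intro x y z
    ext w
    simp only [Set.mem_setOf_eq, Set.mem_singleton_iff]
    constructor
    · rintro ⟨u, rfl, rfl⟩; exact ⟨x + y, rfl, (add_assoc x y z).symm⟩
    · rintro ⟨u, rfl, rfl⟩; exact ⟨y + z, rfl, add_assoc x y z⟩
  rev := by
    intro x y z h
    simp only [Set.mem_singleton_iff] at h ⊢
    rw [h]; abel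

/-!
If `i₁, i₂ : ℤ/2ℤ → G` were a coproduct, then for morphisms `f₁, f₂ : ℤ/2ℤ → H` with induced map
`g`, every endomorphism `σ` of `H` fixing `f₁ 1` and `f₂ 1` would satisfy `σ ∘ g = g` by uniqueness.
In particular `σ` would fix `g c` for any `c ∈ i₁ 1 + i₂ 1`, an element of `f₁ 1 + f₂ 1`.
This fails for the hypergroup `H` of `±`-orbits of `ℤ × ℤ`, with `f₁ 1 = [(1, 0)]`,
`f₂ 1 = [(0, 1)]` and `σ` induced by `(x, y) ↦ (x, -y)`: the sum `[(1, 0)] + [(0, 1)]` is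
`{[(1, 1)], [(1, -1)]}`, and `σ` swaps its two elements.
-/

theorem IsHom.comp {M N P : CanHG} {f : M.carrier → N.carrier} {g : N.carrier → P.carrier}
    (hg : IsHom N P g) (hf : IsHom M N f) : IsHom M P (g ∘ f) :=
  ⟨by simp only [Function.comp_apply, hf.1, hg.1],
    fun x y z hz => hg.2 (f x) (f y) (f z) (hf.2 x y z hz)⟩

def Z2.lift (H : CanHG) (a : H.carrier) : Z2.carrier → H.carrier :=
  fun t : ZMod 2 => if t = 0 then H.zero else a

theorem Z2.lift_one (H : CanHG) (a : H.carrier) : Z2.lift H a (1 : ZMod 2) = a :=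
  if_neg one_ne_zero

theorem Z2.isHom_lift (H : CanHG) {a : H.carrier} (ha : H.zero ∈ H.add a a) :
    IsHom Z2 H (Z2.lift H a) := by
  refine ⟨if_pos rfl, ?_⟩
  intro (x : ZMod 2) (y : ZMod 2) z (hz : z = x + y)
  subst hz
  have zero_or_one : ∀ t : ZMod 2, t = 0 ∨ t = 1 := by decide
  rcases zero_or_one x with rfl | rfl
  · simp only [Z2.lift, zero_add, if_pos, H.zero_add]
    exact Set.mem_singleton _
  rcases zero_or_one y with rfl | rfl
  · simp only [Z2.lift, add_zero, if_pos, H.comm _ H.zero, H.zero_add]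
    exact Set.mem_singleton _
  · simpa only [Z2.lift, if_neg one_ne_zero, show (1 + 1 : ZMod 2) = 0 from rfl, if_pos] using ha

theorem IsHom.comp_Z2_lift {H H' : CanHG} {σ : H.carrier → H'.carrier} (hσ : IsHom H H' σ)
    (a : H.carrier) : σ ∘ Z2.lift H a = Z2.lift H' (σ a) := by
  funext (t : ZMod 2)
  show σ (ite _ _ _) = ite _ _ _
  split_ifs
  exacts [hσ.1, rfl]

namespace MulAction.orbitRel.Quotient

variable {Γ A : Type} [Group Γ] [AddCommGroup A] [DistribMulAction Γ A]

theorem mk_eq_mk_iff {x y : A} :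
    (Quotient.mk'' x : orbitRel.Quotient Γ A) = Quotient.mk'' y ↔ ∃ γ : Γ, γ • y = x := by
  rw [Quotient.eq'', orbitRel_apply, mem_orbit_iff]

theorem exists_add_eq_of_mk_eq_mk_add {u y z : A}
    (h : (Quotient.mk'' u : orbitRel.Quotient Γ A) = Quotient.mk'' (y + z)) :
    ∃ y' z', (Quotient.mk'' y' : orbitRel.Quotient Γ A) = Quotient.mk'' y ∧
      (Quotient.mk'' z' : orbitRel.Quotient Γ A) = Quotient.mk'' z ∧ u = y' + z' := by
  obtain ⟨γ, rfl⟩ := mk_eq_mk_iff.mp h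
  exact ⟨γ • y, γ • z, mk_eq_mk_iff.mpr ⟨γ, rfl⟩, mk_eq_mk_iff.mpr ⟨γ, rfl⟩, smul_add γ y z⟩

theorem mk_eq_mk_iff_eq_or_eq_neg {x y : A} :
    (Quotient.mk'' x : orbitRel.Quotient ℤˣ A) = Quotient.mk'' y ↔ x = y ∨ x = -y := by
  rw [mk_eq_mk_iff]
  constructor
  · rintro ⟨u, rfl⟩
    rcases Int.units_eq_one_or u with rfl | rfl
    · exact Or.inl (one_smul _ y)
    · exact Or.inr (by rw [Units.neg_smul, one_smul])
  · rintro (rfl | rfl)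
    · exact ⟨1, one_smul _ x⟩
    · exact ⟨-1, by rw [Units.neg_smul, one_smul]⟩

end MulAction.orbitRel.Quotient

open MulAction orbitRel.Quotient

section OrbitHypergroup

variable {Γ A B : Type} [Group Γ] [AddCommGroup A] [DistribMulAction Γ A] [AddCommGroup B]
  [DistribMulAction Γ B]

variable (Γ A) in
abbrev orbitHypergroup : CanHG where
  carrier := orbitRel.Quotient Γ A
  add p q := {r | ∃ x y : A, Quotient.mk'' x = p ∧ Quotient.mk'' y = q ∧ Quotient.mk'' (x + y) = r}
  zero := Quotient.mk'' 0
  neg := Quotient.map' Neg.neg fun a b h => by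
    obtain ⟨γ, rfl⟩ := mem_orbit_iff.mp (orbitRel_apply.mp h)
    exact orbitRel_apply.mpr ⟨γ, smul_neg γ b⟩
  comm p q := by
    ext r
    exact ⟨fun ⟨x, y, hx, hy, hr⟩ => ⟨y, x, hy, hx, add_comm x y ▸ hr⟩,
      fun ⟨y, x, hy, hx, hr⟩ => ⟨x, y, hx, hy, add_comm y x ▸ hr⟩⟩
  total p q := by
    induction p using Quotient.inductionOn' with | h x => ?_
    induction q using Quotient.inductionOn' with | h y => ?_
    exact ⟨_, x, y, rfl, rfl, rfl⟩
  zero_add q := by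
    ext r
    constructor
    · rintro ⟨x, y, hx, rfl, rfl⟩
      obtain ⟨γ, rfl⟩ := mk_eq_mk_iff.mp hx
      simp
    · rintro rfl
      induction r using Quotient.inductionOn' with | h y => ?_
      exact ⟨0, y, rfl, rfl, by rw [zero_add]⟩
  assoc p q s := by
    ext w
    constructor
    · rintro ⟨u, ⟨y, z, rfl, rfl, rfl⟩, x, u', rfl, hu', rfl⟩
      obtain ⟨y', z', hy, hz, rfl⟩ := exists_add_eq_of_mk_eq_mk_add hu'
      exact ⟨_, ⟨x, y', rfl, hy, rfl⟩, x + y', z', rfl, hz, by rw [add_assoc]⟩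
    · rintro ⟨u, ⟨x, y, rfl, rfl, rfl⟩, u', z, hu', rfl, rfl⟩
      obtain ⟨x', y', hx, hy, rfl⟩ := exists_add_eq_of_mk_eq_mk_add hu'
      exact ⟨_, ⟨y', z, hy, rfl, rfl⟩, x', y' + z, hx, rfl, by rw [add_assoc]⟩
  rev p q s := by
    rintro ⟨x, y, rfl, rfl, rfl⟩
    exact ⟨x + y, -x, rfl, rfl, by rw [add_neg_cancel_comm]⟩

def DistribMulActionHom.orbitMap (φ : A →+[Γ] B) :
    (orbitHypergroup Γ A).carrier → (orbitHypergroup Γ B).carrier :=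
  Quotient.map' φ fun a b h => by
    obtain ⟨γ, rfl⟩ := mem_orbit_iff.mp (orbitRel_apply.mp h)
    exact orbitRel_apply.mpr ⟨γ, (map_smul φ γ b).symm⟩

theorem DistribMulActionHom.isHom_orbitMap (φ : A →+[Γ] B) :
    IsHom (orbitHypergroup Γ A) (orbitHypergroup Γ B) φ.orbitMap := by
  refine ⟨congrArg Quotient.mk'' (map_zero φ), ?_⟩
  rintro _ _ _ ⟨x, y, rfl, rfl, rfl⟩
  exact ⟨φ x, φ y, rfl, rfl, congrArg Quotient.mk'' (map_add φ x y).symm⟩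

theorem orbitHypergroup.zero_mem_add_self (x : A) :
    (orbitHypergroup ℤˣ A).zero ∈ (orbitHypergroup ℤˣ A).add (Quotient.mk'' x) (Quotient.mk'' x) :=
  ⟨x, -x, rfl, mk_eq_mk_iff_eq_or_eq_neg.mpr (Or.inr rfl), congrArg Quotient.mk'' (add_neg_cancel x)⟩

end OrbitHypergroup

def reflectSnd : ℤ × ℤ →+[ℤˣ] ℤ × ℤ where
  toFun v := (v.1, -v.2)
  map_smul' u v := by simp
  map_zero' := by simp
  map_add' v w := by simp [add_comm]

theorem reflectSnd_apply (v : ℤ × ℤ) : reflectSnd v = (v.1, -v.2) := rfl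

theorem reflectSnd_orbitMap_ne_of_mem_add {w : (orbitHypergroup ℤˣ (ℤ × ℤ)).carrier}
    (hw : w ∈ (orbitHypergroup ℤˣ (ℤ × ℤ)).add (Quotient.mk'' (1, 0)) (Quotient.mk'' (0, 1))) :
    reflectSnd.orbitMap w ≠ w := by
  obtain ⟨⟨x₁, x₂⟩, ⟨y₁, y₂⟩, hx, hy, rfl⟩ := hw
  change Quotient.mk'' (reflectSnd _) ≠ Quotient.mk'' _
  rw [mk_eq_mk_iff_eq_or_eq_neg] at hx hy
  rw [Ne, mk_eq_mk_iff_eq_or_eq_neg]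
  simp only [Prod.ext_iff, Prod.fst_add, Prod.snd_add, Prod.fst_neg, Prod.snd_neg,
    reflectSnd_apply] at hx hy ⊢
  omega

/-- The coproduct `ℤ/2ℤ ⊔ ℤ/2ℤ` does not exist in the category of canonical
hypergroups. -/
theorem stmt_17 :
    ¬ ∃ (Gc : CanHG) (i₁ i₂ : {f : Z2.carrier → Gc.carrier // IsHom Z2 Gc f}),
      ∀ (H : CanHG) (f₁ f₂ : {f : Z2.carrier → H.carrier // IsHom Z2 H f}),
        ∃! g : {g : Gc.carrier → H.carrier // IsHom Gc H g},
          g.1 ∘ i₁.1 = f₁.1 ∧ g.1 ∘ i₂.1 = f₂.1 := by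
  rintro ⟨Gc, i₁, i₂, hu⟩
  set H := orbitHypergroup ℤˣ (ℤ × ℤ)
  set σ := reflectSnd.orbitMap
  have hσ : IsHom H H σ := reflectSnd.isHom_orbitMap
  have hσa : σ (Quotient.mk'' (1, 0)) = Quotient.mk'' (1, 0) := rfl
  have hσb : σ (Quotient.mk'' (0, 1)) = Quotient.mk'' (0, 1) :=
    mk_eq_mk_iff_eq_or_eq_neg.mpr (Or.inr rfl)
  obtain ⟨g, ⟨hg₁, hg₂⟩, hg_unique⟩ :=
    hu H ⟨_, Z2.isHom_lift H (orbitHypergroup.zero_mem_add_self (1, 0))⟩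
      ⟨_, Z2.isHom_lift H (orbitHypergroup.zero_mem_add_self (0, 1))⟩
  have hσg : σ ∘ g.1 = g.1 :=
    congrArg Subtype.val <| hg_unique ⟨_, hσ.comp g.2⟩
      ⟨by rw [Function.comp_assoc, hg₁, hσ.comp_Z2_lift, hσa],
        by rw [Function.comp_assoc, hg₂, hσ.comp_Z2_lift, hσb]⟩
  obtain ⟨c, hc⟩ := Gc.total (i₁.1 (1 : ZMod 2)) (i₂.1 (1 : ZMod 2))
  have hga : g.1 (i₁.1 (1 : ZMod 2)) = Quotient.mk'' (1, 0) :=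
    (congrFun hg₁ (1 : ZMod 2)).trans (Z2.lift_one _ _)
  have hgb : g.1 (i₂.1 (1 : ZMod 2)) = Quotient.mk'' (0, 1) :=
    (congrFun hg₂ (1 : ZMod 2)).trans (Z2.lift_one _ _)
  have hgc := g.2.2 _ _ c hc
  rw [hga, hgb] at hgc
  exact reflectSnd_orbitMap_ne_of_mem_add hgc (congrFun hσg c)
end

section
/- Let (M, 0) be a pointed simple matroid with closure operator C. Define a hyperoperation on M by: 0 is the additive identity; for x ≠ 0, x + x = {x, 0}; and for distinct nonzero x, y, x + y = C({x, y}) \ {x, y, 0}. Then (M, +, 0) is a commutative mosaic in which every element is its own inverse (i.e., x ∈ y + z implies z ∈ y + x, with −x = x). -/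
open Classical

/-- The hyperoperation associated to a pointed simple matroid makes it a commutative
mosaic in which every element is its own inverse. -/
theorem stmt_18 {M : Type*} (C : Set M → Set M) (z : M)
    (hext : ∀ S : Set M, S ⊆ C S)
    (hmono : ∀ S T : Set M, S ⊆ T → C S ⊆ C T)
    (hidem : ∀ S : Set M, C (C S) = C S)
    (hexch : ∀ (x y : M) (S : Set M), x ∉ C S → x ∈ C (insert y S) → y ∈ C (insert x S))
    (hzero : C ∅ = {z}) (hsimple : ∀ x : M, C {x} = {x, z}) :
    let add : M → M → Set M := fun x y =>
      if x = z then {y} else if y = z then {x}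
      else if x = y then {x, z} else C {x, y} \ {x, y, z}
    (∀ x y : M, add x y = add y x) ∧
    (∀ x : M, add z x = {x} ∧ add x z = {x}) ∧
    (∀ x y w : M, x ∈ add y w → y ∈ add x w ∧ w ∈ add y x) := by
  intro add
  have hadd : ∀ x y : M, add x y = if x = z then {y} else if y = z then {x}
      else if x = y then {x, z} else C {x, y} \ {x, y, z} := fun x y => rfl
  have hcomm : ∀ x y : M, add x y = add y x := by
    intro x y
    rw [hadd, hadd]
    by_cases hx : x = z
    · by_cases hy : y = z
      · subst hx; subst hy; simp
      · simp [hx, hy]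
    · by_cases hy : y = z
      · simp [hx, hy]
      · by_cases hxy : x = y
        · subst hxy; simp [hx]
        · simp only [if_neg hx, if_neg hy, if_neg hxy, if_neg (Ne.symm hxy)]
          rw [Set.pair_comm x y, Set.insert_comm x y]
  have hkey : ∀ x y w : M, x ∈ add y w → y ∈ add x w := by
    intro x y w hx
    rw [hadd] at hx ⊢
    by_cases hy : y = z
    · rw [if_pos hy, Set.mem_singleton_iff] at hx
      subst hx
      by_cases hw : x = z
      · simp [hw, hy]
      · simp [hw, hy]
    · by_cases hw : w = z
      · rw [if_neg hy, if_pos hw, Set.mem_singleton_iff] at hx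
        subst hx
        simp [hy, hw]
      · by_cases hyw : y = w
        · rw [if_neg hy, if_neg hw, if_pos hyw, Set.mem_insert_iff,
            Set.mem_singleton_iff] at hx
          rcases hx with hx | hx
          · subst hx; simp [hy, hw, hyw]
          · subst hx; simp [hyw]
        · rw [if_neg hy, if_neg hw, if_neg hyw] at hx
          simp only [Set.mem_diff, Set.mem_insert_iff, Set.mem_singleton_iff,
            not_or] at hx
          obtain ⟨hxC, hxy, hxw, hxz⟩ := hx
          have hxnotw : x ∉ C {w} := by
            rw [hsimple w]
            simp [hxw, hxz]
          have hyC : y ∈ C (insert x {w}) := hexch x y {w} hxnotw hxC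
          rw [if_neg hxz, if_neg hw, if_neg hxw]
          simp only [Set.mem_diff, Set.mem_insert_iff, Set.mem_singleton_iff, not_or]
          exact ⟨hyC, Ne.symm hxy, hyw, hy⟩
  refine ⟨hcomm, ?_, ?_⟩
  · intro x
    constructor
    · rw [hadd]; simp
    · rw [hadd]
      by_cases hx : x = z
      · simp [hx]
      · simp [hx]
  · intro x y w hx
    refine ⟨hkey x y w hx, ?_⟩
    rw [hcomm y w] at hx
    rw [hcomm y x]
    exact hkey x w y hx
end
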